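/- Let Q be a closable, orthogonally additive Hermitean quadratic form on a dense domain D in a direct integral Hilbert space H = ∫⊕_A H^α dμ(α). Then for any countable partition {Δᵢ}_{i∈ℕ} of a measurable set Δ and any Φ ∈ D, one has lim_{n→∞} Q(P_{∪_{i≥n} Δᵢ} Φ) = 0. -/

import Mathlib

/-!
The tails `ψₙ = P(⋃_{i ≥ n} Δᵢ) Φ` lie in `D` and tend to `0` by countable additivity of `P`.
For `m ≤ n` we have `ψₘ - ψₙ = P(⋃_{m ≤ i < n} Δᵢ) Φ`, so finite additivity of `Q` gives
`Q(ψₘ - ψₙ) = ∑_{m ≤ i < n} Q(P_{Δᵢ} Φ)`. Boundedness of `Q(P_Δ Φ)` over all measurable `Δ` bounds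
every finite subsum of the real series `∑ Q(P_{Δᵢ} Φ)`, which therefore converges absolutely, so
its blocks tend to `0`. Closability then turns `ψₙ → 0` into `Q(ψₙ) → 0`.
-/

open MeasureTheory Filter Topology

theorem summable_of_abs_sum_le {ι : Type*} {a : ι → ℝ} {M : ℝ}
    (h : ∀ F : Finset ι, |∑ i ∈ F, a i| ≤ M) : Summable a := by
  classical
  refine .of_abs (summable_of_sum_le (c := 2 * M) (fun i => abs_nonneg (a i)) fun F => ?_)
  have hpos : ∑ i ∈ F with 0 ≤ a i, |a i| = ∑ i ∈ F with 0 ≤ a i, a i :=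
    Finset.sum_congr rfl fun i hi => abs_of_nonneg (Finset.mem_filter.1 hi).2
  have hneg : ∑ i ∈ F with ¬0 ≤ a i, |a i| = -∑ i ∈ F with ¬0 ≤ a i, a i := by
    rw [← Finset.sum_neg_distrib]
    exact Finset.sum_congr rfl fun i hi => abs_of_neg (not_le.1 (Finset.mem_filter.1 hi).2)
  rw [← F.sum_filter_add_sum_filter_not (0 ≤ a ·), hpos, hneg]
  linarith [abs_le.1 (h (F.filter (0 ≤ a ·))), abs_le.1 (h (F.filter (¬0 ≤ a ·)))]

theorem Summable.tendsto_sum_Ico_atTop_zero {G : Type*} [AddCommGroup G] [TopologicalSpace G]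
    [IsTopologicalAddGroup G] {f : ℕ → G} (hf : Summable f) :
    Tendsto (fun p : ℕ × ℕ => ∑ i ∈ Finset.Ico p.1 p.2, f i) atTop (𝓝 0) := by
  intro e he
  obtain ⟨s, hs⟩ := hf.vanishing he
  obtain ⟨N, hN⟩ := s.exists_nat_subset_range
  rw [mem_map, mem_atTop_sets]
  refine ⟨(N, 0), fun p hp => hs _ (Finset.disjoint_of_subset_right hN ?_)⟩
  rw [Finset.range_eq_Ico]
  exact (Finset.Ico_disjoint_Ico_consecutive 0 N p.2).symm.mono_left
    (Finset.Ico_subset_Ico_left hp.1)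

theorem tendsto_swap_atTop {α β : Type*} [Preorder α] [Preorder β] :
    Tendsto (Prod.swap : α × β → β × α) atTop atTop :=
  Monotone.tendsto_atTop_atTop (fun _ _ h => ⟨h.2, h.1⟩) fun p => ⟨p.swap, le_rfl⟩

theorem Set.iUnion_Ico_union_iUnion_ge {α : Type*} (s : ℕ → Set α) {m n : ℕ} (h : m ≤ n) :
    (⋃ i ∈ Finset.Ico m n, s i) ∪ (⋃ i, ⋃ (_ : n ≤ i), s i) = ⋃ i, ⋃ (_ : m ≤ i), s i := by
  ext x
  simp only [Set.mem_union, Set.mem_iUnion, Finset.mem_Ico, exists_prop]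
  constructor
  · rintro (⟨i, ⟨hmi, -⟩, hx⟩ | ⟨i, hni, hx⟩)
    exacts [⟨i, hmi, hx⟩, ⟨i, h.trans hni, hx⟩]
  · rintro ⟨i, hmi, hx⟩
    rcases lt_or_ge i n with hin | hni
    exacts [Or.inl ⟨i, ⟨hmi, hin⟩, hx⟩, Or.inr ⟨i, hni, hx⟩]

theorem Pairwise.disjoint_iUnion_Ico_iUnion_ge {α : Type*} {s : ℕ → Set α}
    (hs : Pairwise (Function.onFun Disjoint s)) (m n : ℕ) :
    Disjoint (⋃ i ∈ Finset.Ico m n, s i) (⋃ i, ⋃ (_ : n ≤ i), s i) := by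
  simp only [Set.disjoint_iUnion_left, Set.disjoint_iUnion_right, Finset.mem_Ico]
  exact fun i hi j hj => hs (by omega)

section CountablyAdditive

variable {A M : Type*} [MeasurableSpace A]

def IsCountablyAdditive [AddCommMonoid M] [TopologicalSpace M] (μ : Set A → M) : Prop :=
  ∀ s : ℕ → Set A, (∀ i, MeasurableSet (s i)) → Pairwise (Function.onFun Disjoint s) →
    HasSum (fun i => μ (s i)) (μ (⋃ i, s i))

variable [AddCommGroup M] [TopologicalSpace M] [IsTopologicalAddGroup M] [T2Space M]

namespace IsCountablyAdditive

variable {μ : Set A → M}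

theorem empty (hμ : IsCountablyAdditive μ) : μ ∅ = 0 := by
  have h := hμ (fun _ => ∅) (fun _ => .empty) fun _ _ _ => disjoint_bot_left
  rw [Set.iUnion_empty] at h
  exact tendsto_nhds_unique tendsto_const_nhds h.summable.tendsto_atTop_zero

open Classical in
noncomputable def toVectorMeasure (hμ : IsCountablyAdditive μ) : VectorMeasure A M where
  measureOf' s := if MeasurableSet s then μ s else 0
  empty' := by simp [hμ.empty]
  not_measurable' _ hs := if_neg hs
  m_iUnion' s hs hd := by simpa only [hs, MeasurableSet.iUnion hs, if_true] using hμ s hs hd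

theorem toVectorMeasure_apply (hμ : IsCountablyAdditive μ) {s : Set A} (hs : MeasurableSet s) :
    hμ.toVectorMeasure s = μ s :=
  if_pos hs

theorem union (hμ : IsCountablyAdditive μ) {s t : Set A} (hs : MeasurableSet s)
    (ht : MeasurableSet t) (h : Disjoint s t) : μ (s ∪ t) = μ s + μ t := by
  simpa only [hμ.toVectorMeasure_apply, hs, ht, hs.union ht] using
    hμ.toVectorMeasure.of_union h hs ht

theorem tendsto_iUnion_ge (hμ : IsCountablyAdditive μ) {s : ℕ → Set A}
    (hs : ∀ i, MeasurableSet (s i)) (hd : Pairwise (Function.onFun Disjoint s)) :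
    Tendsto (fun n => μ (⋃ i, ⋃ (_ : n ≤ i), s i)) atTop (𝓝 0) := by
  have htail (n : ℕ) : μ (⋃ i, ⋃ (_ : n ≤ i), s i) = ∑' k, μ (s (k + n)) :=
    (Set.iUnion_ge_eq_iUnion_nat_add s n ▸
      hμ _ (fun k => hs _) (hd.comp_of_injective (add_left_injective n))).tsum_eq.symm
  simpa only [htail] using tendsto_sum_nat_add fun i => μ (s i)

theorem sub_iUnion_ge (hμ : IsCountablyAdditive μ) {s : ℕ → Set A}
    (hs : ∀ i, MeasurableSet (s i)) (hd : Pairwise (Function.onFun Disjoint s)) {m n : ℕ}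
    (hmn : m ≤ n) :
    μ (⋃ i, ⋃ (_ : m ≤ i), s i) - μ (⋃ i, ⋃ (_ : n ≤ i), s i) =
      μ (⋃ i ∈ Finset.Ico m n, s i) := by
  rw [← Set.iUnion_Ico_union_iUnion_ge s hmn,
    hμ.union (Finset.measurableSet_biUnion _ fun i _ => hs i)
      (.iUnion fun i => .iUnion fun _ => hs i) (hd.disjoint_iUnion_Ico_iUnion_ge m n),
    add_sub_cancel_right]

end IsCountablyAdditive
end CountablyAdditive

section FinitelyAdditive

variable {A β : Type*} [MeasurableSpace A]

def IsFinitelyAdditive [AddCommMonoid β] (q : Set A → β) : Prop :=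
  ∀ (N : ℕ) (s : Fin N → Set A), (∀ i, MeasurableSet (s i)) →
    Pairwise (Function.onFun Disjoint s) → q (⋃ i, s i) = ∑ i, q (s i)

theorem IsFinitelyAdditive.biUnion_finset [AddCommMonoid β] {q : Set A → β}
    (hq : IsFinitelyAdditive q) {ι : Type*} (F : Finset ι) {s : ι → Set A}
    (hs : ∀ i, MeasurableSet (s i)) (hd : Pairwise (Function.onFun Disjoint s)) :
    q (⋃ i ∈ F, s i) = ∑ i ∈ F, q (s i) := by
  let e : Fin F.card ≃ F := F.equivFin.symm
  have h := hq F.card (fun j => s (e j)) (fun j => hs _)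
    (hd.comp_of_injective (Subtype.val_injective.comp e.injective))
  rwa [e.surjective.iUnion_comp (fun i : F => s i), Set.iUnion_subtype,
    e.sum_comp (fun i : F => q (s i)), Finset.sum_coe_sort F (fun i => q (s i))] at h

theorem IsFinitelyAdditive.summable {q : Set A → ℝ} (hq : IsFinitelyAdditive q) {M : ℝ}
    (hM : ∀ t, MeasurableSet t → |q t| ≤ M) {ι : Type*} {s : ι → Set A}
    (hs : ∀ i, MeasurableSet (s i)) (hd : Pairwise (Function.onFun Disjoint s)) :
    Summable fun i => q (s i) :=
  summable_of_abs_sum_le fun F => by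
    rw [← hq.biUnion_finset F hs hd]
    exact hM _ (F.measurableSet_biUnion fun i _ => hs i)

end FinitelyAdditive

theorem stmt5_general {A H : Type*} [MeasurableSpace A]
    [NormedAddCommGroup H] [InnerProductSpace ℂ H]
    (P : Set A → H →L[ℂ] H)
    (hPsigma : ∀ (Δi : ℕ → Set A), (∀ i, MeasurableSet (Δi i)) →
      Pairwise (Function.onFun Disjoint Δi) →
      ∀ x : H, HasSum (fun i => P (Δi i) x) (P (⋃ i, Δi i) x))
    (D : Submodule ℂ H)
    (Q : H → ℝ)
    -- closability
    (hclos : ∀ Φ : ℕ → H, (∀ n, Φ n ∈ D) → Tendsto (fun n => Φ n) atTop (nhds 0) →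
      Tendsto (fun p : ℕ × ℕ => Q (Φ p.1 - Φ p.2)) atTop (nhds 0) →
      Tendsto (fun n => Q (Φ n)) atTop (nhds 0))
    -- orthogonal additivity: stability of the domain
    (hstab : ∀ Δ, MeasurableSet Δ → ∀ Φ ∈ D, P Δ Φ ∈ D)
    -- orthogonal additivity: Σ-boundedness
    (hbnd : ∀ Φ ∈ D, ∃ M > (0 : ℝ), ∀ Δ, MeasurableSet Δ → |Q (P Δ Φ)| < M)
    -- orthogonal additivity: finite additivity
    (hadd : ∀ (N : ℕ) (Δi : Fin N → Set A) (Δ : Set A), MeasurableSet Δ →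
      (∀ i, MeasurableSet (Δi i)) → Pairwise (Function.onFun Disjoint Δi) →
      (⋃ i, Δi i) = Δ → ∀ Φ ∈ D, Q (P Δ Φ) = ∑ i, Q (P (Δi i) Φ))
    -- a countable measurable partition of Δ
    (Δi : ℕ → Set A) (Δ : Set A)
    (hΔi : ∀ i, MeasurableSet (Δi i)) (hdisj : Pairwise (Function.onFun Disjoint Δi))
    (Φ : H) (hΦ : Φ ∈ D) :
    Tendsto (fun n => Q (P (⋃ i, ⋃ (_ : n ≤ i), Δi i) Φ)) atTop (nhds 0) := by
  set T : ℕ → Set A := fun n => ⋃ i, ⋃ (_ : n ≤ i), Δi i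
  have hP (x : H) : IsCountablyAdditive fun Δ => P Δ x := fun s hs hd => hPsigma s hs hd x
  have hQ : ∀ Ψ ∈ D, IsFinitelyAdditive fun Δ => Q (P Δ Ψ) :=
    fun Ψ hΨ N s hs hd => hadd N s _ (.iUnion hs) hs hd rfl Ψ hΨ
  have hsum : ∀ Ψ ∈ D, Summable fun i => Q (P (Δi i) Ψ) := fun Ψ hΨ => by
    obtain ⟨M, -, hM⟩ := hbnd Ψ hΨ
    exact (hQ Ψ hΨ).summable (fun Δ hΔ => (hM Δ hΔ).le) hΔi hdisj
  -- `Q` need not be even, so when `n < m` the difference of tails is handled through `-Φ`.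
  have hdiff (m n : ℕ) : Q (P (T m) Φ - P (T n) Φ) =
      ∑ i ∈ Finset.Ico m n, Q (P (Δi i) Φ) + ∑ i ∈ Finset.Ico n m, Q (P (Δi i) (-Φ)) := by
    rcases le_total m n with h | h
    · rw [Finset.Ico_eq_empty_of_le h, Finset.sum_empty, add_zero,
        (hP Φ).sub_iUnion_ge hΔi hdisj h, (hQ Φ hΦ).biUnion_finset _ hΔi hdisj]
    · rw [Finset.Ico_eq_empty_of_le h, Finset.sum_empty, zero_add, ← neg_sub_neg, ← map_neg,
        ← map_neg, (hP (-Φ)).sub_iUnion_ge hΔi hdisj h,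
        (hQ (-Φ) (neg_mem hΦ)).biUnion_finset _ hΔi hdisj]
  refine hclos _ (fun n => hstab _ (.iUnion fun i => .iUnion fun _ => hΔi i) Φ hΦ)
    ((hP Φ).tendsto_iUnion_ge hΔi hdisj) ?_
  have hcauchy := (hsum Φ hΦ).tendsto_sum_Ico_atTop_zero.add
    ((hsum (-Φ) (neg_mem hΦ)).tendsto_sum_Ico_atTop_zero.comp tendsto_swap_atTop)
  rw [add_zero] at hcauchy
  exact hcauchy.congr fun p => (hdiff p.1 p.2).symm

/-- For a closable, orthogonally additive Hermitean quadratic form on a dense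
domain of a direct integral Hilbert space (the direct integral structure is encoded by the
projection-valued measure `P`), the tails of partitions are negligible:
`Q(P_{∪_{i≥n} Δᵢ} Φ) → 0`. -/
theorem stmt5 {A H : Type*} [MeasurableSpace A]
    [NormedAddCommGroup H] [InnerProductSpace ℂ H] [CompleteSpace H]
    (P : Set A → H →L[ℂ] H)
    (hPsa : ∀ Δ, MeasurableSet Δ → IsSelfAdjoint (P Δ))
    (hPmul : ∀ Δ₁ Δ₂, MeasurableSet Δ₁ → MeasurableSet Δ₂ →
      (P Δ₁).comp (P Δ₂) = P (Δ₁ ∩ Δ₂))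
    (hPuniv : P Set.univ = 1)
    (hPsigma : ∀ (Δi : ℕ → Set A), (∀ i, MeasurableSet (Δi i)) →
      Pairwise (Function.onFun Disjoint Δi) →
      ∀ x : H, HasSum (fun i => P (Δi i) x) (P (⋃ i, Δi i) x))
    (D : Submodule ℂ H) (hdense : Dense (D : Set H))
    (Q : H → ℝ)
    -- closability
    (hclos : ∀ Φ : ℕ → H, (∀ n, Φ n ∈ D) → Tendsto (fun n => Φ n) atTop (nhds 0) →
      Tendsto (fun p : ℕ × ℕ => Q (Φ p.1 - Φ p.2)) atTop (nhds 0) →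
      Tendsto (fun n => Q (Φ n)) atTop (nhds 0))
    -- orthogonal additivity: stability of the domain
    (hstab : ∀ Δ, MeasurableSet Δ → ∀ Φ ∈ D, P Δ Φ ∈ D)
    -- orthogonal additivity: Σ-boundedness
    (hbnd : ∀ Φ ∈ D, ∃ M > (0 : ℝ), ∀ Δ, MeasurableSet Δ → |Q (P Δ Φ)| < M)
    -- orthogonal additivity: finite additivity
    (hadd : ∀ (N : ℕ) (Δi : Fin N → Set A) (Δ : Set A), MeasurableSet Δ →
      (∀ i, MeasurableSet (Δi i)) → Pairwise (Function.onFun Disjoint Δi) →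
      (⋃ i, Δi i) = Δ → ∀ Φ ∈ D, Q (P Δ Φ) = ∑ i, Q (P (Δi i) Φ))
    -- a countable measurable partition of Δ
    (Δi : ℕ → Set A) (Δ : Set A) (hΔ : MeasurableSet Δ)
    (hΔi : ∀ i, MeasurableSet (Δi i)) (hdisj : Pairwise (Function.onFun Disjoint Δi))
    (hunion : (⋃ i, Δi i) = Δ) (Φ : H) (hΦ : Φ ∈ D) :
    Tendsto (fun n => Q (P (⋃ i, ⋃ (_ : n ≤ i), Δi i) Φ)) atTop (nhds 0) :=
  stmt5_general P hPsigma D Q hclos hstab hbnd hadd Δi Δ hΔi hdisj Φ hΦ
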